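/- arXiv:2201.09238 — 2 statements merged into one kernel-verified Lean document; each statement's English description precedes it below -/
import Mathlib

section
/- Let d ≥ 1, q > 1 and 0 < α < d. Let w : (0, ∞) → ℝ be a measurable function with ∫_0^∞ |w(ρ)|^{q/(q−1)} ρ^{(αq + 1 − d)/(q−1)} dρ < ∞ and set W(ρ) = ∫_ρ^∞ w(s) ds. Then there exists a constant C = C(d, q, α) > 0, independent of w and u, such that for every measurable u : ℝ^d → ℂ, | ∫_{ℝ^d} |u(x)| W(|x|) dx | ≤ C ( ∫_0^∞ |w(ρ)|^{q/(q−1)} ρ^{(αq + 1 − d)/(q−1)} dρ )^{(q−1)/q} ‖ |x|^{−α} ⋆ |u| ‖_{L^q(ℝ^d)}. -/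
open MeasureTheory Filter
open scoped ENNReal FourierTransform

noncomputable section

abbrev Ed (d : ℕ) : Type := EuclideanSpace ℝ (Fin d)

/-- A function on `ℝ^d` is radial if its value depends only on the norm. -/
def IsRadial {d : ℕ} (f : Ed d → ℂ) : Prop :=
  ∀ x y : Ed d, ‖x‖ = ‖y‖ → f x = f y

/-- `F` is (a function representative of) the Fourier transform of `f`, in the sense of
tempered distributions: pairing `F` against any Schwartz function `g` agrees with pairing
`f` against the Fourier transform of `g` (and all pairings are given by convergent
integrals). -/
def IsFourierPair {d : ℕ} (f F : Ed d → ℂ) : Prop :=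
  ∀ g : SchwartzMap (Ed d) ℂ,
    Integrable (fun x : Ed d => f x * FourierTransform.fourier (fun y : Ed d => g y) x) volume ∧
    Integrable (fun x : Ed d => F x * g x) volume ∧
    ∫ x : Ed d, F x * g x = ∫ x : Ed d, f x * FourierTransform.fourier (fun y : Ed d => g y) x

/-- `u = D^s f`, i.e. the (distributional) Fourier transform of `u` is
`‖ξ‖ ^ s` times the Fourier transform of `f`. -/
def IsDpow {d : ℕ} (s : ℝ) (f u : Ed d → ℂ) : Prop :=
  ∃ F : Ed d → ℂ,
    IsFourierPair f F ∧ IsFourierPair u (fun ξ : Ed d => ((‖ξ‖ ^ s : ℝ) : ℂ) * F ξ)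

/-- A complex-valued function is (a.e.) nonnegative real. -/
def AENonneg {d : ℕ} (u : Ed d → ℂ) : Prop :=
  ∀ᵐ x : Ed d ∂volume, 0 ≤ (u x).re ∧ (u x).im = 0

/-- The Riesz-type convolution `(|x|^{-α} ⋆ |u|)(x)`. -/
def rieszConv {d : ℕ} (α : ℝ) (u : Ed d → ℂ) (x : Ed d) : ℝ≥0∞ :=
  ∫⁻ y : Ed d, (‖u y‖₊ : ℝ≥0∞) / ENNReal.ofReal (‖x - y‖ ^ α)

/-- The `L^q` norm of the Riesz-type convolution `|x|^{-α} ⋆ |u|`. -/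
def rieszNorm {d : ℕ} (α q : ℝ) (u : Ed d → ℂ) : ℝ≥0∞ :=
  (∫⁻ x : Ed d, rieszConv α u x ^ q) ^ (1 / q)

/-- The homogeneous Sobolev norm `‖D^s f‖_{L²}` computed on the Fourier side (Plancherel):
`(∫ ‖ξ‖^{2s} ‖F ξ‖² dξ)^{1/2}` where `F = 𝓕 f`. -/
def fracNorm {d : ℕ} (s : ℝ) (F : Ed d → ℂ) : ℝ≥0∞ :=
  (∫⁻ ξ : Ed d, ENNReal.ofReal (‖ξ‖ ^ (2 * s)) * (‖F ξ‖₊ : ℝ≥0∞) ^ (2 : ℝ)) ^ (1 / (2 : ℝ))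


/-!
Bounding `|W(|x|)|` by `∫_{|x|}^∞ |w|` and exchanging the order of integration turns the left
side into `∫_0^∞ |w(s)| m(s) ds` with `m(s) = ∫_{|y|<s} |u|`. Hölder's inequality with the weights
`s^{±(αq+1-d)/q}` leaves `∫_0^∞ m(s)^q s^{d-1-αq} ds`. For `|x| ≤ s` every point of the ball of
radius `s` lies within `2s` of `x`, so `m(s) ≤ (2s)^α (|·|^{-α} ⋆ |u|)(x)`; taking `s = |x|` and
integrating in polar coordinates bounds that integral by a constant times
`‖|·|^{-α} ⋆ |u|‖_q^q`.
-/

open Set Metric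

theorem lintegral_fun_norm_addHaar {E : Type*} [NormedAddCommGroup E] [NormedSpace ℝ E]
    [MeasurableSpace E] [BorelSpace E] [FiniteDimensional ℝ E] [Nontrivial E]
    (μ : Measure E) [μ.IsAddHaarMeasure] {g : ℝ → ℝ≥0∞} (hg : Measurable g) :
    ∫⁻ x, g ‖x‖ ∂μ = Module.finrank ℝ E * μ (ball 0 1) *
      ∫⁻ r in Ioi 0, g r * ENNReal.ofReal (r ^ (Module.finrank ℝ E - 1)) := by
  have hg' : Measurable fun p : sphere (0 : E) 1 × Ioi (0 : ℝ) => g p.2.1 :=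
    hg.comp (measurable_subtype_coe.comp measurable_snd)
  have hpow :
      Measurable fun r : Ioi (0 : ℝ) => ENNReal.ofReal (r.1 ^ (Module.finrank ℝ E - 1)) :=
    (measurable_subtype_coe.pow_const _).ennreal_ofReal
  calc ∫⁻ x, g ‖x‖ ∂μ = ∫⁻ x : ({0}ᶜ : Set E), g ‖x.1‖ ∂μ.comap (↑) := by
        rw [lintegral_subtype_comap (measurableSet_singleton 0).compl (fun x => g ‖x‖),
          restrict_compl_singleton]
    _ = ∫⁻ p, g p.2.1 ∂μ.toSphere.prod (.volumeIoiPow (Module.finrank ℝ E - 1)) := by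
        simpa using (μ.measurePreserving_homeomorphUnitSphereProd.lintegral_comp hg')
    _ = μ.toSphere univ *
          ∫⁻ r : Ioi (0 : ℝ), g r.1 ∂.volumeIoiPow (Module.finrank ℝ E - 1) := by
        rw [lintegral_prod _ hg'.aemeasurable]
        simp [lintegral_const, mul_comm]
    _ = _ := by
        rw [Measure.toSphere_apply_univ, Measure.volumeIoiPow,
          lintegral_withDensity_eq_lintegral_mul _ hpow (g := fun r => g r.1)
            (hg.comp measurable_subtype_coe)]
        simp_rw [Pi.mul_apply, mul_comm (ENNReal.ofReal _)]
        rw [lintegral_subtype_comap measurableSet_Ioi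
          (fun r : ℝ => g r * ENNReal.ofReal (r ^ _))]

theorem lintegral_mul_setLIntegral_Ioi_norm {E : Type*} [NormedAddCommGroup E]
    [MeasurableSpace E] [OpensMeasurableSpace E] (μ : Measure E) [SFinite μ]
    {f : E → ℝ≥0∞} {g : ℝ → ℝ≥0∞} (hf : Measurable f) (hg : Measurable g) :
    ∫⁻ x, f x * (∫⁻ s in Ioi ‖x‖, g s) ∂μ = ∫⁻ s in Ioi 0, g s * ∫⁻ x in ball 0 s, f x ∂μ := by
  have hswap : ∀ x s, f x * (Ioi ‖x‖).indicator g s = g s * (ball 0 s).indicator f x := by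
    intro x s
    by_cases hxs : ‖x‖ < s <;> simp [indicator, hxs, mul_comm]
  have hmeas : Measurable (Function.uncurry fun x s => f x * (Ioi ‖x‖).indicator g s) := by
    have hS : MeasurableSet {p : E × ℝ | ‖p.1‖ < p.2} :=
      measurableSet_lt measurable_fst.norm measurable_snd
    convert (hf.comp measurable_fst).mul ((hg.comp measurable_snd).indicator hS) using 1
    ext ⟨x, s⟩
    by_cases hxs : ‖x‖ < s <;> simp [indicator, hxs]
  calc ∫⁻ x, f x * (∫⁻ s in Ioi ‖x‖, g s) ∂μ
      = ∫⁻ x, (∫⁻ s, f x * (Ioi ‖x‖).indicator g s) ∂μ := by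
        refine lintegral_congr fun x => ?_
        rw [lintegral_const_mul _ (hg.indicator measurableSet_Ioi),
          lintegral_indicator measurableSet_Ioi]
    _ = ∫⁻ s, ∫⁻ x, g s * (ball 0 s).indicator f x ∂μ := by
        simp_rw [← hswap]
        exact lintegral_lintegral_swap hmeas.aemeasurable
    _ = ∫⁻ s, g s * ∫⁻ x in ball 0 s, f x ∂μ := by
        refine lintegral_congr fun s => ?_
        rw [lintegral_const_mul _ (hf.indicator measurableSet_ball),
          lintegral_indicator measurableSet_ball]
    _ = _ := by
        refine (setLIntegral_eq_of_support_subset fun s hs => ?_).symm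
        by_contra hs0
        simp [ball_eq_empty.mpr (not_lt.mp hs0)] at hs

theorem measurable_setLIntegral_ball {E : Type*} [SeminormedAddCommGroup E] [MeasurableSpace E]
    (μ : Measure E) (f : E → ℝ≥0∞) : Measurable fun s : ℝ => ∫⁻ x in ball 0 s, f x ∂μ :=
  Monotone.measurable fun _ _ hst => lintegral_mono_set (ball_subset_ball hst)

theorem ofReal_abs_integral_norm_mul_integral_Ioi_le {E F : Type*} [NormedAddCommGroup E]
    [MeasurableSpace E] [OpensMeasurableSpace E] [NormedAddCommGroup F] [MeasurableSpace F]
    [OpensMeasurableSpace F] (μ : Measure E) [SFinite μ] {u : E → F} {w : ℝ → ℝ}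
    (hu : Measurable u) (hw : Measurable w) :
    ENNReal.ofReal |∫ x, ‖u x‖ * (∫ s in Ioi ‖x‖, w s) ∂μ| ≤
      ∫⁻ s in Ioi 0, ‖w s‖ₑ * ∫⁻ x in ball 0 s, ‖u x‖ₑ ∂μ := by
  rw [← Real.enorm_eq_ofReal_abs, ← lintegral_mul_setLIntegral_Ioi_norm μ hu.enorm hw.enorm]
  refine (enorm_integral_le_lintegral_enorm _).trans (lintegral_mono fun x => ?_)
  rw [enorm_mul, enorm_norm]
  gcongr
  exact enorm_integral_le_lintegral_enorm _

theorem setLIntegral_Ioi_mul_le_Lp_mul_Lq_rpow_weight {p q : ℝ} (hpq : p.HolderConjugate q)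
    {f g : ℝ → ℝ≥0∞} (hf : Measurable f) (hg : Measurable g) {a b : ℝ}
    (hab : a / p + b / q = 0) :
    ∫⁻ s in Ioi 0, f s * g s ≤
      (∫⁻ s in Ioi 0, f s ^ p * ENNReal.ofReal (s ^ a)) ^ (1 / p) *
        (∫⁻ s in Ioi 0, g s ^ q * ENNReal.ofReal (s ^ b)) ^ (1 / q) := by
  have hweight : ∀ {r c : ℝ} {s : ℝ}, 0 < r → 0 < s →
      ENNReal.ofReal (s ^ (c / r)) ^ r = ENNReal.ofReal (s ^ c) := by
    intro r c s hr hs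
    rw [ENNReal.ofReal_rpow_of_nonneg (by positivity) hr.le, ← Real.rpow_mul hs.le,
      div_mul_cancel₀ _ hr.ne']
  calc ∫⁻ s in Ioi 0, f s * g s
      = ∫⁻ s in Ioi 0,
          (f s * ENNReal.ofReal (s ^ (a / p))) * (g s * ENNReal.ofReal (s ^ (b / q))) := by
        refine setLIntegral_congr_fun measurableSet_Ioi fun s (hs : 0 < s) => ?_
        rw [mul_mul_mul_comm, ← ENNReal.ofReal_mul (by positivity), ← Real.rpow_add hs, hab,
          Real.rpow_zero, ENNReal.ofReal_one, mul_one]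
    _ ≤ _ := ENNReal.lintegral_mul_le_Lp_mul_Lq _ hpq
        (hf.mul (by fun_prop)).aemeasurable (hg.mul (by fun_prop)).aemeasurable
    _ = _ := by
        congr 2 <;> refine setLIntegral_congr_fun measurableSet_Ioi fun s (hs : 0 < s) => ?_
        · rw [ENNReal.mul_rpow_of_nonneg _ _ hpq.nonneg, hweight hpq.pos hs]
        · rw [ENNReal.mul_rpow_of_nonneg _ _ hpq.symm.nonneg, hweight hpq.symm.pos hs]

theorem lintegral_ball_le_rieszConv {d : ℕ} {α s : ℝ} (hα : 0 ≤ α) (u : Ed d → ℂ) {x : Ed d}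
    (hxs : ‖x‖ ≤ s) :
    ∫⁻ y in ball 0 s, ‖u y‖ₑ ≤ ENNReal.ofReal ((2 * s) ^ α) * rieszConv α u x := by
  have hpt : ∀ y ∈ ball (0 : Ed d) s,
      ‖u y‖ₑ ≤ ENNReal.ofReal ((2 * s) ^ α) * (‖u y‖ₑ / ENNReal.ofReal (‖x - y‖ ^ α)) := by
    intro y hy
    have hy : ‖y‖ < s := mem_ball_zero_iff.mp hy
    have hxy : ‖x - y‖ < 2 * s := by linarith [norm_sub_le x y]
    have hD : ENNReal.ofReal ((2 * s) ^ α) ≠ 0 :=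
      (ENNReal.ofReal_pos.mpr (Real.rpow_pos_of_pos (by linarith [norm_nonneg y]) α)).ne'
    calc ‖u y‖ₑ = ENNReal.ofReal ((2 * s) ^ α) * (‖u y‖ₑ / ENNReal.ofReal ((2 * s) ^ α)) :=
          (ENNReal.mul_div_cancel hD ENNReal.ofReal_ne_top).symm
      _ ≤ _ := by gcongr
  calc ∫⁻ y in ball 0 s, ‖u y‖ₑ
      ≤ ∫⁻ y in ball 0 s,
          ENNReal.ofReal ((2 * s) ^ α) * (‖u y‖ₑ / ENNReal.ofReal (‖x - y‖ ^ α)) :=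
        setLIntegral_mono_ae' measurableSet_ball (ae_of_all _ hpt)
    _ ≤ ENNReal.ofReal ((2 * s) ^ α) * ∫⁻ y, ‖u y‖ₑ / ENNReal.ofReal (‖x - y‖ ^ α) := by
        rw [lintegral_const_mul' _ _ ENNReal.ofReal_ne_top]
        exact mul_le_mul_right (setLIntegral_le_lintegral _ _) _
    _ = _ := rfl

theorem natCast_mul_volume_unitBall_ne_zero {d : ℕ} (hd : 1 ≤ d) :
    (d : ℝ≥0∞) * volume (ball (0 : Ed d) 1) ≠ 0 :=
  have : Nonempty (Fin d) := ⟨⟨0, hd⟩⟩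
  mul_ne_zero (by exact_mod_cast (by omega : d ≠ 0)) (measure_ball_pos _ _ one_pos).ne'

theorem natCast_mul_volume_unitBall_ne_top {d : ℕ} :
    (d : ℝ≥0∞) * volume (ball (0 : Ed d) 1) ≠ ⊤ :=
  ENNReal.mul_ne_top (ENNReal.natCast_ne_top d) measure_ball_lt_top.ne

theorem setLIntegral_Ioi_lintegral_ball_rpow_le {d : ℕ} (hd : 1 ≤ d) {α q : ℝ} (hα : 0 ≤ α)
    (hq : 0 < q) (u : Ed d → ℂ) :
    ∫⁻ s in Ioi 0, (∫⁻ y in ball 0 s, ‖u y‖ₑ) ^ q * ENNReal.ofReal (s ^ ((d : ℝ) - 1 - α * q)) ≤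
      ENNReal.ofReal (2 ^ (α * q)) / (d * volume (ball (0 : Ed d) 1)) *
        ∫⁻ x, rieszConv α u x ^ q := by
  have : Nonempty (Fin d) := ⟨⟨0, hd⟩⟩
  set m : ℝ → ℝ≥0∞ := fun s => ∫⁻ y in ball 0 s, ‖u y‖ₑ
  have hm : Measurable m := measurable_setLIntegral_ball volume _
  have hpolar := lintegral_fun_norm_addHaar (volume : Measure (Ed d))
    (g := fun r => m r ^ q * ENNReal.ofReal (r ^ (-(α * q)))) ((hm.pow_const q).mul (by fun_prop))
  rw [finrank_euclideanSpace_fin] at hpolar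
  have hradial : ∫⁻ r in Ioi 0, m r ^ q * ENNReal.ofReal (r ^ (-(α * q))) *
      ENNReal.ofReal (r ^ (d - 1)) =
      ∫⁻ s in Ioi 0, m s ^ q * ENNReal.ofReal (s ^ ((d : ℝ) - 1 - α * q)) := by
    refine setLIntegral_congr_fun measurableSet_Ioi fun r (hr : 0 < r) => ?_
    rw [mul_assoc, ← ENNReal.ofReal_mul (by positivity), ← Real.rpow_natCast,
      ← Real.rpow_add hr, Nat.cast_sub hd, Nat.cast_one]
    ring_nf
  have hpoint : ∀ x : Ed d, m ‖x‖ ^ q * ENNReal.ofReal (‖x‖ ^ (-(α * q))) ≤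
      ENNReal.ofReal (2 ^ (α * q)) * rieszConv α u x ^ q := by
    intro x
    rcases (norm_nonneg x).eq_or_lt with hx | hx
    · simp [m, ← hx, ENNReal.zero_rpow_of_pos hq]
    calc m ‖x‖ ^ q * ENNReal.ofReal (‖x‖ ^ (-(α * q)))
        ≤ (ENNReal.ofReal ((2 * ‖x‖) ^ α) * rieszConv α u x) ^ q *
          ENNReal.ofReal (‖x‖ ^ (-(α * q))) := by
          gcongr
          exact lintegral_ball_le_rieszConv hα u le_rfl
      _ = ENNReal.ofReal ((2 * ‖x‖) ^ α) ^ q * ENNReal.ofReal (‖x‖ ^ (-(α * q))) *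
          rieszConv α u x ^ q := by
          rw [ENNReal.mul_rpow_of_nonneg _ _ hq.le]
          ring
      _ = _ := by
          rw [ENNReal.ofReal_rpow_of_nonneg (by positivity) hq.le,
            ← ENNReal.ofReal_mul (by positivity), ← Real.rpow_mul (by positivity),
            Real.mul_rpow zero_le_two hx.le, mul_assoc,
            ← Real.rpow_add hx, add_neg_cancel, Real.rpow_zero, mul_one]
  rw [← ENNReal.mul_div_right_comm, ENNReal.le_div_iff_mul_le
    (.inl (natCast_mul_volume_unitBall_ne_zero hd)) (.inl natCast_mul_volume_unitBall_ne_top),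
    mul_comm, ← hradial, ← hpolar, ← lintegral_const_mul' _ _ ENNReal.ofReal_ne_top]
  exact lintegral_mono hpoint

theorem statement10_general (d : ℕ) (hd : 1 ≤ d) (q α : ℝ)
    (hq : 1 < q) (hα1 : 0 < α) :
    ∃ C : ℝ, 0 < C ∧
      ∀ w : ℝ → ℝ, Measurable w →
        (∫⁻ ρ in Set.Ioi (0 : ℝ),
            ENNReal.ofReal (|w ρ| ^ (q / (q - 1)) * ρ ^ ((α * q + 1 - (d : ℝ)) / (q - 1)))) < ⊤ →
        ∀ u : Ed d → ℂ, Measurable u →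
          ENNReal.ofReal |∫ x : Ed d, ‖u x‖ * (∫ s in Set.Ioi ‖x‖, w s)| ≤
            ENNReal.ofReal C *
              (∫⁻ ρ in Set.Ioi (0 : ℝ),
                ENNReal.ofReal (|w ρ| ^ (q / (q - 1)) * ρ ^ ((α * q + 1 - (d : ℝ)) / (q - 1))))
                ^ ((q - 1) / q) *
              rieszNorm α q u := by
  set K : ℝ≥0∞ := (ENNReal.ofReal (2 ^ (α * q)) / (d * volume (ball (0 : Ed d) 1))) ^ (1 / q)
  have hK0 : K ≠ 0 := (ENNReal.rpow_pos (ENNReal.div_pos (by simp [Real.rpow_pos_of_pos])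
    natCast_mul_volume_unitBall_ne_top) (ENNReal.div_ne_top ENNReal.ofReal_ne_top
      (natCast_mul_volume_unitBall_ne_zero hd))).ne'
  have hKtop : K ≠ ⊤ := ENNReal.rpow_ne_top_of_nonneg (by positivity)
    (ENNReal.div_ne_top ENNReal.ofReal_ne_top (natCast_mul_volume_unitBall_ne_zero hd))
  refine ⟨K.toReal, ENNReal.toReal_pos hK0 hKtop, fun w hw _ u hu => ?_⟩
  rw [ENNReal.ofReal_toReal hKtop]
  have hpq : (q / (q - 1)).HolderConjugate q := (Real.HolderConjugate.conjExponent hq).symm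
  have hweights : (α * q + 1 - d) / (q - 1) / (q / (q - 1)) + (d - 1 - α * q) / q = 0 := by
    have hq0 : q ≠ 0 := by linarith
    have hq1 : q - 1 ≠ 0 := by linarith
    field_simp
    ring
  set A := ∫⁻ ρ in Ioi 0, ENNReal.ofReal (|w ρ| ^ (q / (q - 1)) * ρ ^ ((α * q + 1 - d) / (q - 1)))
  have hA : ∫⁻ s in Ioi 0, ‖w s‖ₑ ^ (q / (q - 1)) *
      ENNReal.ofReal (s ^ ((α * q + 1 - d) / (q - 1))) = A := by
    refine setLIntegral_congr_fun measurableSet_Ioi fun s (hs : 0 < s) => ?_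
    rw [Real.enorm_eq_ofReal_abs, ENNReal.ofReal_rpow_of_nonneg (abs_nonneg _) hpq.nonneg,
      ← ENNReal.ofReal_mul (by positivity)]
  calc _ ≤ ∫⁻ s in Ioi 0, ‖w s‖ₑ * ∫⁻ y in ball 0 s, ‖u y‖ₑ :=
        ofReal_abs_integral_norm_mul_integral_Ioi_le volume hu hw
    _ ≤ A ^ ((q - 1) / q) * (∫⁻ s in Ioi 0, (∫⁻ y in ball 0 s, ‖u y‖ₑ) ^ q *
          ENNReal.ofReal (s ^ ((d : ℝ) - 1 - α * q))) ^ (1 / q) := by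
        simpa only [hA, one_div_div] using setLIntegral_Ioi_mul_le_Lp_mul_Lq_rpow_weight hpq
          hw.enorm (measurable_setLIntegral_ball volume fun y : Ed d => ‖u y‖ₑ) hweights
    _ ≤ A ^ ((q - 1) / q) * (K * (∫⁻ x, rieszConv α u x ^ q) ^ (1 / q)) := by
        rw [← ENNReal.mul_rpow_of_nonneg _ _ (by positivity)]
        gcongr
        exact setLIntegral_Ioi_lintegral_ball_rpow_le hd hα1.le (by linarith) u
    _ = _ := by
        rw [rieszNorm]
        ring

/-- Lemma `lem:important2`: weighted pairing of `|u|` against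
`W(|x|) = ∫_{|x|}^∞ w(s) ds` is controlled by the `L^q` norm of the Riesz potential. -/
theorem statement10 (d : ℕ) (hd : 1 ≤ d) (q α : ℝ)
    (hq : 1 < q) (hα1 : 0 < α) (hα2 : α < (d : ℝ)) :
    ∃ C : ℝ, 0 < C ∧
      ∀ w : ℝ → ℝ, Measurable w →
        (∫⁻ ρ in Set.Ioi (0 : ℝ),
            ENNReal.ofReal (|w ρ| ^ (q / (q - 1)) * ρ ^ ((α * q + 1 - (d : ℝ)) / (q - 1)))) < ⊤ →
        ∀ u : Ed d → ℂ, Measurable u →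
          ENNReal.ofReal |∫ x : Ed d, ‖u x‖ * (∫ s in Set.Ioi ‖x‖, w s)| ≤
            ENNReal.ofReal C *
              (∫⁻ ρ in Set.Ioi (0 : ℝ),
                ENNReal.ofReal (|w ρ| ^ (q / (q - 1)) * ρ ^ ((α * q + 1 - (d : ℝ)) / (q - 1))))
                ^ ((q - 1) / q) *
              rieszNorm α q u :=
  statement10_general d hd q α hq hα1

end
end

section
/- Let d ≥ 2 and γ > d − 1. Then there exists a constant C = C(d, γ) > 0 such that for all r, ρ > 0 with r/2 ≤ ρ ≤ 2r and every unit vector θ ∈ 𝕊^{d−1}, the spherical kernel K(r, ρ) = ∫_{𝕊^{d−1}} (1 + |rθ − ρω|^2)^{−γ/2} dω satisfies K(r, ρ) ≤ C r^{−(d−1)}, where dω is the surface measure on the unit sphere 𝕊^{d−1} ⊂ ℝ^d. -/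
open MeasureTheory Filter
open scoped ENNReal FourierTransform

noncomputable section

/-!
Since `ρ ≥ r / 2`, one has `|rθ - ρω|² ≥ r² |θ - ω|² / 2` on the sphere, so the integrand is
`≲ 2^{-γk}` where `|θ - ω| ≈ 2^k / r`. A cap `{ω : |ω - θ| ≤ t}` of the unit sphere of `ℝ^{n+1}`
has `μH[n]`-measure `≲ tⁿ`: for `t ≤ 1/2` it is the image of a `t`-ball of `ℝⁿ` under the
`2`-Lipschitz graph map `y ↦ √(1 - |y|²) θ + y`, and for larger `t` one uses that the whole
sphere, being compact and locally covered by such caps, has finite measure. Summing over the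
dyadic caps gives `r^{-n} ∑ₖ 2^{(n-γ)k}`, a geometric series that converges because `γ > n`.
-/

open Metric Set Module
open scoped NNReal RealInnerProductSpace

lemma abs_sqrt_one_sub_sq_sub_sqrt_one_sub_sq_le {a b : ℝ} (ha₀ : 0 ≤ a) (ha : a ≤ 1 / 2)
    (hb₀ : 0 ≤ b) (hb : b ≤ 1 / 2) :
    |√(1 - a ^ 2) - √(1 - b ^ 2)| ≤ |a - b| := by
  set u := √(1 - a ^ 2)
  set v := √(1 - b ^ 2)
  have hu : u ^ 2 = 1 - a ^ 2 := Real.sq_sqrt (by nlinarith)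
  have hv : v ^ 2 = 1 - b ^ 2 := Real.sq_sqrt (by nlinarith)
  have hu₀ : 1 / 2 ≤ u := by nlinarith [Real.sqrt_nonneg (1 - a ^ 2)]
  have hv₀ : 1 / 2 ≤ v := by nlinarith [Real.sqrt_nonneg (1 - b ^ 2)]
  -- `(u - v) (u + v) = (b - a) (b + a)` and `a + b ≤ 1 ≤ u + v`
  have key : |u - v| * (u + v) ≤ |a - b| * (u + v) :=
    calc |u - v| * (u + v) = |b - a| * (b + a) := by
          rw [← abs_of_nonneg (by linarith : 0 ≤ u + v), ← abs_of_nonneg (by linarith : 0 ≤ b + a),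
            ← abs_mul, ← abs_mul]
          congr 1
          linear_combination hu - hv
      _ ≤ |a - b| * (u + v) := by
          rw [abs_sub_comm]; exact mul_le_mul_of_nonneg_left (by linarith) (abs_nonneg _)
  exact le_of_mul_le_mul_right key (by linarith)

lemma norm_smul_sub_smul_sq {E : Type*} [NormedAddCommGroup E] [InnerProductSpace ℝ E]
    {θ ω : E} (hθ : ‖θ‖ = 1) (hω : ‖ω‖ = 1) (r ρ : ℝ) :
    ‖r • θ - ρ • ω‖ ^ 2 = (r - ρ) ^ 2 + r * ρ * ‖θ - ω‖ ^ 2 := by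
  rw [norm_sub_sq_real, norm_sub_sq_real, norm_smul, norm_smul, real_inner_smul_left,
    real_inner_smul_right, hθ, hω, Real.norm_eq_abs, Real.norm_eq_abs, mul_pow, mul_pow, sq_abs,
    sq_abs]
  ring

lemma exists_le_two_pow_le_max (x : ℝ) :
    ∃ k : ℕ, x ≤ 2 ^ k ∧ (2 : ℝ) ^ k ≤ max 1 (2 * x) := by
  rcases le_or_gt x 1 with hx₁ | hx₁
  · exact ⟨0, by simpa using hx₁, by simp⟩
  · obtain ⟨k, hk, hk'⟩ := exists_nat_pow_near hx₁.le one_lt_two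
    exact ⟨k + 1, hk'.le, le_max_of_le_right (by rw [pow_succ]; linarith)⟩

section SphereCaps

variable {E F : Type*} [NormedAddCommGroup E] [InnerProductSpace ℝ E]
  [SeminormedAddCommGroup F] [NormedSpace ℝ F]

def sphereGraph (θ : E) (L : F ≃ₗᵢ[ℝ] (ℝ ∙ θ)ᗮ) (y : F) : E :=
  √(1 - ‖y‖ ^ 2) • θ + L y

lemma lipschitzOnWith_sphereGraph {θ : E} (hθ : ‖θ‖ = 1) (L : F ≃ₗᵢ[ℝ] (ℝ ∙ θ)ᗮ) :
    LipschitzOnWith 2 (sphereGraph θ L) (closedBall 0 (1 / 2)) := by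
  refine LipschitzOnWith.of_dist_le_mul fun y hy y' hy' => ?_
  rw [mem_closedBall_zero_iff] at hy hy'
  have hsqrt : |√(1 - ‖y‖ ^ 2) - √(1 - ‖y'‖ ^ 2)| ≤ ‖y - y'‖ :=
    (abs_sqrt_one_sub_sq_sub_sqrt_one_sub_sq_le (norm_nonneg _) hy (norm_nonneg _) hy').trans
      (abs_norm_sub_norm_le _ _)
  calc dist (sphereGraph θ L y) (sphereGraph θ L y')
      = ‖(√(1 - ‖y‖ ^ 2) - √(1 - ‖y'‖ ^ 2)) • θ + (L y - L y' : E)‖ := by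
        rw [dist_eq_norm, sphereGraph, sphereGraph, sub_smul]; abel_nf
    _ ≤ ‖y - y'‖ + ‖y - y'‖ := by
        refine (norm_add_le _ _).trans (add_le_add ?_ ?_)
        · rwa [norm_smul, hθ, mul_one, Real.norm_eq_abs]
        · rw [← Submodule.coe_sub, Submodule.norm_coe, ← map_sub, L.norm_map]
    _ = (2 : ℝ≥0) * dist y y' := by rw [dist_eq_norm]; push_cast; ring

lemma closedBall_inter_sphere_subset_image_sphereGraph {θ : E} (hθ : ‖θ‖ = 1)
    (L : F ≃ₗᵢ[ℝ] (ℝ ∙ θ)ᗮ) {t : ℝ} (ht : t ≤ 1 / 2) :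
    closedBall θ t ∩ sphere 0 1 ⊆ sphereGraph θ L '' closedBall 0 t := by
  rintro ω ⟨hωθ, hω⟩
  rw [mem_closedBall, dist_eq_norm] at hωθ
  rw [mem_sphere_zero_iff_norm] at hω
  set c := ⟪θ, ω⟫ with hc_def
  have hω_sub : ‖ω - θ‖ ^ 2 = 2 * (1 - c) := by
    rw [norm_sub_sq_real, hω, hθ, real_inner_comm]; ring
  have hc : 7 / 8 ≤ c := by nlinarith [norm_nonneg (ω - θ)]
  have hperp : ω - c • θ ∈ (ℝ ∙ θ)ᗮ := by
    rw [Submodule.mem_orthogonal_singleton_iff_inner_right, inner_sub_right,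
      real_inner_smul_right, real_inner_self_eq_norm_sq, hθ]
    ring
  have hperp_sq : ‖ω - c • θ‖ ^ 2 = 1 - c ^ 2 := by
    rw [norm_sub_sq_real, real_inner_smul_right, real_inner_comm, ← hc_def, norm_smul, hω, hθ,
      Real.norm_eq_abs, mul_one, sq_abs]
    ring
  refine ⟨L.symm ⟨ω - c • θ, hperp⟩, ?_, ?_⟩
  · rw [mem_closedBall_zero_iff, L.symm.norm_map, Submodule.coe_norm]
    refine le_trans (le_of_pow_le_pow_left₀ two_ne_zero (norm_nonneg _) ?_) hωθ
    nlinarith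
  · rw [sphereGraph, L.apply_symm_apply, L.symm.norm_map, Submodule.coe_norm, hperp_sq,
      show 1 - (1 - c ^ 2) = c ^ 2 by ring, Real.sqrt_sq (by linarith)]
    simp

variable [FiniteDimensional ℝ E] [MeasurableSpace E] [BorelSpace E] {n : ℕ}

lemma hausdorffMeasure_closedBall_inter_sphere_le (hE : finrank ℝ E = n + 1) {θ : E}
    (hθ : ‖θ‖ = 1) {t : ℝ} (ht : t ≤ 1 / 2) :
    μH[n] (closedBall θ t ∩ sphere 0 1) ≤
      2 ^ n * μH[n] (closedBall (0 : EuclideanSpace ℝ (Fin n)) t) := by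
  have : Fact (finrank ℝ E = n + 1) := ⟨hE⟩
  have hV : finrank ℝ (ℝ ∙ θ)ᗮ = n :=
    Submodule.finrank_orthogonal_span_singleton (norm_ne_zero_iff.1 (by simp [hθ]))
  let L : EuclideanSpace ℝ (Fin n) ≃ₗᵢ[ℝ] (ℝ ∙ θ)ᗮ :=
    ((stdOrthonormalBasis ℝ (ℝ ∙ θ)ᗮ).reindex (finCongr hV)).repr.symm
  calc μH[n] (closedBall θ t ∩ sphere 0 1)
      ≤ μH[n] (sphereGraph θ L '' closedBall 0 t) :=
        measure_mono (closedBall_inter_sphere_subset_image_sphereGraph hθ L ht)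
    _ ≤ 2 ^ n * μH[n] (closedBall (0 : EuclideanSpace ℝ (Fin n)) t) := by
        simpa [ENNReal.rpow_natCast] using
          ((lipschitzOnWith_sphereGraph hθ L).mono (closedBall_subset_closedBall ht))
            |>.hausdorffMeasure_image_le (Nat.cast_nonneg n)

lemma hausdorffMeasure_sphere_lt_top (hE : finrank ℝ E = n + 1) :
    μH[n] (sphere (0 : E) 1) < ⊤ :=
  (isCompact_sphere 0 1).measure_lt_top_of_nhdsWithin fun θ hθ =>
    ⟨closedBall θ (1 / 2) ∩ sphere 0 1,
      inter_mem (mem_nhdsWithin_of_mem_nhds (closedBall_mem_nhds θ (by norm_num)))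
        self_mem_nhdsWithin,
      (hausdorffMeasure_closedBall_inter_sphere_le hE (by simpa using hθ) le_rfl).trans_lt
        (ENNReal.mul_lt_top (by simp) measure_closedBall_lt_top)⟩

lemma exists_hausdorffMeasure_closedBall_inter_sphere_le (hE : finrank ℝ E = n + 1) :
    ∃ A : ℝ, 0 < A ∧ ∀ θ : E, ‖θ‖ = 1 → ∀ t : ℝ, 0 ≤ t →
      μH[n] (closedBall θ t ∩ sphere 0 1) ≤ ENNReal.ofReal (A * t ^ n) := by
  set B := μH[n] (ball (0 : EuclideanSpace ℝ (Fin n)) 1)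
  set M := μH[n] (sphere (0 : E) 1)
  have hB : B ≠ ⊤ := measure_ball_lt_top.ne
  have hM : M ≠ ⊤ := (hausdorffMeasure_sphere_lt_top hE).ne
  refine ⟨2 ^ n * (B.toReal + M.toReal) + 1, by positivity, fun θ hθ t ht => ?_⟩
  rcases le_or_gt t (1 / 2) with ht₂ | ht₂
  · calc μH[n] (closedBall θ t ∩ sphere 0 1)
        ≤ 2 ^ n * μH[n] (closedBall (0 : EuclideanSpace ℝ (Fin n)) t) :=
          hausdorffMeasure_closedBall_inter_sphere_le hE hθ ht₂
      _ = ENNReal.ofReal (2 ^ n * B.toReal * t ^ n) := by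
          rw [Measure.addHaar_closedBall _ _ ht, finrank_euclideanSpace_fin,
            ENNReal.ofReal_mul (by positivity), ENNReal.ofReal_mul (by positivity),
            ENNReal.ofReal_toReal hB, ENNReal.ofReal_pow zero_le_two, ENNReal.ofReal_ofNat]
          ring
      _ ≤ ENNReal.ofReal ((2 ^ n * (B.toReal + M.toReal) + 1) * t ^ n) := by
          gcongr
          nlinarith [ENNReal.toReal_nonneg (a := M), pow_pos (two_pos (α := ℝ)) n]
  · have h_one : 1 ≤ 2 ^ n * t ^ n := by
      rw [← mul_pow]; exact one_le_pow₀ (by linarith)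
    calc μH[n] (closedBall θ t ∩ sphere 0 1) ≤ M := measure_mono inter_subset_right
      _ = ENNReal.ofReal M.toReal := (ENNReal.ofReal_toReal hM).symm
      _ ≤ ENNReal.ofReal ((2 ^ n * (B.toReal + M.toReal) + 1) * t ^ n) := by
          gcongr
          nlinarith [ENNReal.toReal_nonneg (a := M), ENNReal.toReal_nonneg (a := B),
            pow_nonneg ht n]

end SphereCaps

section SphereKernel

variable {E : Type*} [NormedAddCommGroup E] [InnerProductSpace ℝ E]

lemma ofReal_rpow_le_tsum_indicator {θ ω : E} (hθ : ‖θ‖ = 1) (hω : ‖ω‖ = 1) {r ρ γ : ℝ}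
    (hr : 0 < r) (hρ : r / 2 ≤ ρ) (hγ : 0 ≤ γ) :
    ENNReal.ofReal ((1 + ‖r • θ - ρ • ω‖ ^ 2) ^ (-(γ / 2))) ≤
      ∑' k : ℕ, (closedBall θ (2 ^ k / r)).indicator
        (fun _ => ENNReal.ofReal (((2 ^ k) ^ 2 / 8) ^ (-(γ / 2)))) ω := by
  obtain ⟨k, hk, hk'⟩ := exists_le_two_pow_le_max (r * ‖θ - ω‖)
  refine le_trans ?_ (ENNReal.le_tsum k)
  rw [indicator_of_mem (by rw [mem_closedBall, dist_comm, dist_eq_norm, le_div_iff₀ hr]; linarith)]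
  have hsep := norm_smul_sub_smul_sq hθ hω r ρ
  have hrρ : r ^ 2 / 2 ≤ r * ρ := by nlinarith
  refine ENNReal.ofReal_le_ofReal (Real.rpow_le_rpow_of_nonpos (by positivity) ?_ (by linarith))
  rcases le_max_iff.1 hk' with h | h <;>
    nlinarith [sq_nonneg (r - ρ), norm_nonneg (θ - ω), pow_pos (two_pos (α := ℝ)) k]

variable [FiniteDimensional ℝ E] [MeasurableSpace E] [BorelSpace E] {n : ℕ}

theorem exists_lintegral_sphere_le_rpow (hE : finrank ℝ E = n + 1) {γ : ℝ} (hγ : n < γ) :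
    ∃ C : ℝ, 0 < C ∧ ∀ (r ρ : ℝ) (θ : E), 0 < r → r / 2 ≤ ρ → ‖θ‖ = 1 →
      ∫⁻ ω in sphere (0 : E) 1, ENNReal.ofReal ((1 + ‖r • θ - ρ • ω‖ ^ 2) ^ (-(γ / 2))) ∂μH[n] ≤
        ENNReal.ofReal (C * r ^ (-(n : ℝ))) := by
  obtain ⟨A, hA, hcap⟩ := exists_hausdorffMeasure_closedBall_inter_sphere_le hE
  set q : ℝ := 2 ^ ((n : ℝ) - γ)
  have hq₀ : 0 ≤ q := by positivity
  have hq₁ : q < 1 := Real.rpow_lt_one_of_one_lt_of_neg one_lt_two (by linarith)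
  refine ⟨A * 8 ^ (γ / 2) * (1 - q)⁻¹, by have := sub_pos.2 hq₁; positivity, ?_⟩
  intro r ρ θ hr hρ hθ
  set b : ℕ → ℝ := fun k => ((2 ^ k) ^ 2 / 8) ^ (-(γ / 2))
  have hterm (k : ℕ) :
      b k * (A * (2 ^ k / r) ^ n) = A * 8 ^ (γ / 2) * r ^ (-(n : ℝ)) * q ^ k := by
    have hs : (0 : ℝ) < 2 ^ k := by positivity
    show ((2 ^ k) ^ 2 / 8) ^ (-(γ / 2)) * _ = _
    rw [Real.rpow_pow_comm zero_le_two, Real.div_rpow (by positivity) (by norm_num),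
      ← Real.rpow_natCast ((2 : ℝ) ^ k) 2, ← Real.rpow_mul hs.le, Real.rpow_neg (by norm_num),
      Real.rpow_sub hs, Real.rpow_neg hr.le, Real.rpow_natCast, Real.rpow_natCast, div_pow,
      show ((2 : ℕ) : ℝ) * -(γ / 2) = -γ by push_cast; ring, Real.rpow_neg hs.le]
    field_simp
  calc ∫⁻ ω in sphere (0 : E) 1, ENNReal.ofReal ((1 + ‖r • θ - ρ • ω‖ ^ 2) ^ (-(γ / 2))) ∂μH[n]
      ≤ ∫⁻ ω in sphere (0 : E) 1,
          ∑' k, (closedBall θ (2 ^ k / r)).indicator (fun _ => ENNReal.ofReal (b k)) ω ∂μH[n] :=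
        setLIntegral_mono' isClosed_sphere.measurableSet fun ω hω =>
          ofReal_rpow_le_tsum_indicator hθ (mem_sphere_zero_iff_norm.1 hω) hr hρ (by linarith)
    _ = ∑' k, ENNReal.ofReal (b k) * μH[n] (closedBall θ (2 ^ k / r) ∩ sphere 0 1) := by
        rw [lintegral_tsum fun k => (measurable_const.indicator measurableSet_closedBall).aemeasurable]
        simp_rw [lintegral_indicator_const measurableSet_closedBall,
          Measure.restrict_apply measurableSet_closedBall]
    _ ≤ ∑' k, ENNReal.ofReal (b k) * ENNReal.ofReal (A * (2 ^ k / r) ^ n) := by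
        gcongr with k
        exact hcap θ hθ _ (by positivity)
    _ = ∑' k, ENNReal.ofReal (A * 8 ^ (γ / 2) * r ^ (-(n : ℝ)) * q ^ k) := by
        simp_rw [← ENNReal.ofReal_mul (by positivity : (0 : ℝ) ≤ b _), hterm]
    _ = ENNReal.ofReal (A * 8 ^ (γ / 2) * (1 - q)⁻¹ * r ^ (-(n : ℝ))) := by
        rw [← ENNReal.ofReal_tsum_of_nonneg (fun k => by positivity)
          ((summable_geometric_of_lt_one hq₀ hq₁).mul_left _), tsum_mul_left,
          tsum_geometric_of_lt_one hq₀ hq₁]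
        ring_nf

end SphereKernel

/-- estimate (32) of the spherical kernel `K(r,ρ)`: for `ρ ∼ r` the
kernel `K(r,ρ) = ∫_{𝕊^{d-1}} (1+|rθ-ρω|²)^{-γ/2} dω` is bounded by `C r^{-(d-1)}`.  The
surface measure on the unit sphere is the `(d-1)`-dimensional Hausdorff measure. -/
theorem statement15 (d : ℕ) (hd : 2 ≤ d) (γ : ℝ) (hγ : (d : ℝ) - 1 < γ) :
    ∃ C : ℝ, 0 < C ∧
      ∀ (r ρ : ℝ) (θ : Ed d), 0 < r → 0 < ρ → r / 2 ≤ ρ → ρ ≤ 2 * r → ‖θ‖ = 1 →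
        (∫⁻ ω in Metric.sphere (0 : Ed d) 1,
            ENNReal.ofReal ((1 + ‖r • θ - ρ • ω‖ ^ 2) ^ (-(γ / 2)))
              ∂(μH[(d : ℝ) - 1])) ≤
          ENNReal.ofReal (C * r ^ (-((d : ℝ) - 1))) := by
  obtain ⟨n, rfl⟩ : ∃ n, d = n + 1 := ⟨d - 1, by omega⟩
  rw [Nat.cast_add_one, add_sub_cancel_right] at hγ ⊢
  obtain ⟨C, hC, hK⟩ := exists_lintegral_sphere_le_rpow (E := Ed (n + 1)) (by simp) hγ
  exact ⟨C, hC, fun r ρ θ hr _ hρ _ hθ => hK r ρ θ hr hρ hθ⟩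
end
end
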